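/- Let 𝒩 be a finite set of positive integers, let 𝔯 ⊆ [0,1] ∩ ℚ be a finite set with 0, 1 ∈ 𝔯, let Φ := Φ(𝔯), and let n ∈ 𝒩. Then for every real number b with 0 ≤ b < 1 one has ⌊(n+1)·b⌋ = ⌊(n+1)·b_{𝒩_Φ}⌋. -/

import Mathlib

open scoped BigOperators

/-- The hyperstandard set `Φ(𝔯) = {1 - r/l | r ∈ 𝔯, l ∈ ℤ_{>0}} ∩ [0,1]` associated to a
set of rationals `𝔯`. -/
def Phi (R : Set ℚ) : Set ℝ :=
  {x : ℝ | (∃ r ∈ R, ∃ l : ℕ, 0 < l ∧ x = 1 - (r : ℝ) / l) ∧ 0 ≤ x ∧ x ≤ 1}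

/-- The set `Γ(𝒩, Φ(𝔯)) = {1 - r/l + (1/l)·Σ_{n∈𝒩} m_n/(n+1)} ∩ [0,1]`. -/
def Gamma (N : Finset ℕ) (R : Set ℚ) : Set ℝ :=
  {x : ℝ | (∃ r ∈ R, ∃ l : ℕ, 0 < l ∧ ∃ m : ℕ → ℕ,
      x = 1 - (r : ℝ) / l + (1 / (l : ℝ)) * ∑ n ∈ N, (m n : ℝ) / ((n : ℝ) + 1)) ∧
    0 ≤ x ∧ x ≤ 1}

/-! The largest multiple of `1/(n+1)` below `b` lies in `Γ`, so `b_{𝒩_Φ}` is squeezed between it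
and `b`; hence `(n+1)·b_{𝒩_Φ}` lies between `⌊(n+1)·b⌋` and `(n+1)·b` and has the same floor. -/

theorem floor_eq_floor_of_floor_le_of_le {α : Type*} [Ring α] [LinearOrder α] [FloorRing α]
    [IsStrictOrderedRing α] {x y : α} (h : (⌊y⌋ : α) ≤ x) (hxy : x ≤ y) : ⌊x⌋ = ⌊y⌋ :=
  Int.floor_eq_iff.2 ⟨h, hxy.trans_lt (Int.lt_floor_add_one y)⟩

theorem natCast_div_mem_Gamma {N : Finset ℕ} {R : Set ℚ} (h1R : (1 : ℚ) ∈ R) {n : ℕ}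
    (hn : n ∈ N) {k : ℕ} (hk : k ≤ n + 1) : (k : ℝ) / (n + 1) ∈ Gamma N R := by
  have hk' : (k : ℝ) ≤ n + 1 := by exact_mod_cast hk
  refine ⟨⟨1, h1R, 1, one_pos, fun j => if j = n then k else 0, ?_⟩, by positivity,
    (div_le_one (by positivity)).2 hk'⟩
  simp [ite_div, hn]

theorem stmt2_general (N : Finset ℕ)
    (R : Set ℚ)
    (h1R : (1 : ℚ) ∈ R)
    (n : ℕ) (hnN : n ∈ N)
    (b : ℝ) (hb0 : 0 ≤ b) (hb1 : b < 1)
    (bN : ℝ) (hbN : IsGreatest {b' ∈ Gamma N R | b' ≤ b} bN) :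
    ⌊((n : ℝ) + 1) * b⌋ = ⌊((n : ℝ) + 1) * bN⌋ := by
  set c : ℝ := (n : ℝ) + 1
  have hc : 0 < c := by positivity
  set k : ℕ := ⌊c * b⌋₊
  have hkc : (k : ℝ) ≤ c * b := Nat.floor_le (by positivity)
  have hkn : k ≤ n + 1 := Nat.floor_le_of_le (by push_cast; nlinarith)
  have hk_le_bN : (k : ℝ) / c ≤ bN :=
    hbN.2 ⟨natCast_div_mem_Gamma h1R hnN hkn, (div_le_iff₀' hc).2 hkc⟩
  refine (floor_eq_floor_of_floor_le_of_le ?_ (mul_le_mul_of_nonneg_left hbN.1.2 hc.le)).symm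
  rw [← Int.natCast_floor_eq_floor (by positivity), Int.cast_natCast]
  exact (div_le_iff₀' hc).1 hk_le_bN

/-- For `n ∈ 𝒩` and `0 ≤ b < 1`, one has
`⌊(n+1)·b⌋ = ⌊(n+1)·b_{𝒩_Φ}⌋`. -/
theorem stmt2 (N : Finset ℕ) (hN : ∀ n ∈ N, 0 < n)
    (R : Set ℚ) (hRfin : R.Finite) (hRsub : R ⊆ Set.Icc 0 1)
    (h0R : (0 : ℚ) ∈ R) (h1R : (1 : ℚ) ∈ R)
    (n : ℕ) (hnN : n ∈ N)
    (b : ℝ) (hb0 : 0 ≤ b) (hb1 : b < 1)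
    (bN : ℝ) (hbN : IsGreatest {b' ∈ Gamma N R | b' ≤ b} bN) :
    ⌊((n : ℝ) + 1) * b⌋ = ⌊((n : ℝ) + 1) * bN⌋ :=
  stmt2_general N R h1R n hnN b hb0 hb1 bN hbN
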